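/- Let d ≥ 1, r > 0, b_1,...,b_d < r, l ∈ ℕ with r < l. There exist a constant c ∈ (0,1) and, for all large N, a subset Θ'(N) ⊆ Θ(N) such that |Θ'(N)| ≥ c (log N)^{d−1} and every s = (s_1,...,s_d) ∈ Θ'(N) satisfies s_j ≍ log N for each j = 1,...,d. -/

import Mathlib

open Real Finset

/-- `Ω(2^{-s}) = ∏_j 2^(−r s_j) s_j^(−b_j)`. -/
noncomputable def OmegaVal (d : ℕ) (r : ℝ) (b : Fin d → ℝ) (s : Fin d → ℕ) : ℝ :=
  ∏ j, (2 : ℝ) ^ (-(r * s j)) * (s j : ℝ) ^ (-(b j))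

/-- `Θ(N) = { s ∈ ℕ_{≥1}^d : 1/(2^l N) ≤ Ω(2^{-s}) < 1/N }`. -/
def thetaSet (d : ℕ) (r : ℝ) (b : Fin d → ℝ) (l : ℕ) (N : ℕ) : Set (Fin d → ℕ) :=
  {s | (∀ j, 1 ≤ s j) ∧ 1 / ((2 : ℝ) ^ l * N) ≤ OmegaVal d r b s ∧ OmegaVal d r b s < 1 / N}

lemma aux_grow (β c : ℝ) (hβ : 0 ≤ β) (hc : 0 < c) {x : ℝ}
    (hx : ((2*(β+1)/c)^2 : ℝ) ≤ x) : β * Real.log x ≤ c * x := by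
  have hb1 : 0 < 2*(β+1)/c := by positivity
  have hx0 : 0 < x := lt_of_lt_of_le (by positivity) hx
  set s := Real.sqrt x with hs
  have hs0 : 0 < s := Real.sqrt_pos.mpr hx0
  have hsge : 2*(β+1)/c ≤ s := by
    have := Real.sqrt_le_sqrt hx
    rwa [Real.sqrt_sq hb1.le] at this
  have hlog : Real.log x ≤ 2 * s := by
    have h1 : Real.log s ≤ s - 1 := Real.log_le_sub_one_of_pos hs0
    have h2 : Real.log s = Real.log x / 2 := Real.log_sqrt hx0.le
    nlinarith
  have hcs : 2*β ≤ c * s := by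
    have : 2*(β+1) ≤ c * s := by
      rw [div_le_iff₀ hc] at hsge; linarith [hsge]
    linarith
  have hxs : x = s * s := (Real.mul_self_sqrt hx0.le).symm
  calc β * Real.log x ≤ β * (2*s) := by
        apply mul_le_mul_of_nonneg_left hlog hβ
    _ = (2*β) * s := by ring
    _ ≤ (c*s) * s := mul_le_mul_of_nonneg_right hcs hs0.le
    _ = c * x := by rw [hxs]; ring

lemma exists_step (r lr L2 bd K x : ℝ) (hr : 0 < r) (hL2 : 0 < L2) (hK : 0 ≤ K)
    (t1 : ℕ) (ht1 : 1 ≤ t1)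
    (hgrow : ∀ t : ℝ, (t1:ℝ) ≤ t → |bd| * Real.log t ≤ (r*L2/2) * t)
    (hinc : ∀ t : ℕ, t1 ≤ t → |bd| * (Real.log (t+1) - Real.log t) ≤ lr)
    (hstart : r*L2*t1 + bd*Real.log t1 + K ≤ x) :
    ∃ t : ℕ, t1 ≤ t ∧
      x < r*L2*t + bd*Real.log t + K ∧
      r*L2*t + bd*Real.log t + K ≤ x + (r*L2 + lr) ∧
      x - K ≤ (r*L2 + |bd|) * t ∧
      (t:ℝ) ≤ 1 + 2*x/(r*L2) := by
  have hrL2 : 0 < r * L2 := mul_pos hr hL2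
  set f : ℕ → ℝ := fun t => r*L2*t + bd*Real.log t + K with hf
  have flb : ∀ t : ℕ, t1 ≤ t → (r*L2/2)*(t:ℝ) ≤ f t := by
    intro t ht
    have htr : (t1:ℝ) ≤ (t:ℝ) := Nat.cast_le.mpr ht
    have hgr := hgrow t htr
    have hbd : -(|bd| * Real.log t) ≤ bd * Real.log t := by
      have hlt : 0 ≤ Real.log (t:ℝ) := Real.log_nonneg (by exact_mod_cast le_trans ht1 ht)
      nlinarith [neg_abs_le bd, abs_nonneg bd]
    simp only [hf]
    nlinarith
  have hex : ∃ n : ℕ, x < f (t1 + n) := by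
    refine ⟨⌈2*x/(r*L2)⌉₊ + 1, ?_⟩
    set T := ((t1 + (⌈2*x/(r*L2)⌉₊ + 1) : ℕ) : ℝ) with hT
    have h1 : 2*x/(r*L2) ≤ (⌈2*x/(r*L2)⌉₊ : ℝ) := Nat.le_ceil _
    have h2 : (2*x/(r*L2)) + 1 ≤ T := by
      rw [hT]; push_cast; have : (0:ℝ) ≤ t1 := Nat.cast_nonneg _; linarith
    have h3 := flb (t1 + (⌈2*x/(r*L2)⌉₊ + 1)) (Nat.le_add_right _ _)
    have h4 : x + r*L2/2 ≤ (r*L2/2) * T := by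
      have hm := mul_le_mul_of_nonneg_left h2 (le_of_lt (by positivity : (0:ℝ) < r*L2/2))
      have he : (r*L2/2)*(2*x/(r*L2)+1) = x + r*L2/2 := by field_simp
      linarith [he ▸ hm]
    linarith
  set n0 := Nat.find hex with hn0
  have hft : x < f (t1 + n0) := Nat.find_spec hex
  have hn0pos : n0 ≠ 0 := by
    intro h
    rw [h] at hft
    simp only [Nat.add_zero, hf] at hft
    linarith
  obtain ⟨m, hm⟩ := Nat.exists_eq_succ_of_ne_zero hn0pos
  have hprev : ¬ x < f (t1 + m) := Nat.find_min hex (by omega)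
  push_neg at hprev
  set t := t1 + n0 with htdef
  have ht1t : t1 ≤ t := Nat.le_add_right _ _
  have htm : t = (t1 + m) + 1 := by omega
  have hprevge : t1 ≤ t1 + m := Nat.le_add_right _ _
  have hprevr : (1:ℝ) ≤ ((t1+m : ℕ):ℝ) := by exact_mod_cast le_trans ht1 hprevge
  have hfprev : r*L2*((t1+m:ℕ):ℝ) + bd*Real.log ((t1+m:ℕ):ℝ) + K ≤ x := hprev
  refine ⟨t, ht1t, hft, ?_, ?_, ?_⟩
  · -- upper: f t ≤ x + (r*L2 + lr)
    have hstep : f t = f (t1+m) + r*L2 + bd*(Real.log (((t1+m : ℕ):ℝ) + 1) - Real.log ((t1+m : ℕ):ℝ)) := by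
      simp only [hf, htm]; push_cast; ring
    have hdel : bd*(Real.log (((t1+m : ℕ):ℝ) + 1) - Real.log ((t1+m : ℕ):ℝ)) ≤ lr := by
      have hmono : Real.log ((t1+m : ℕ):ℝ) ≤ Real.log (((t1+m : ℕ):ℝ) + 1) :=
        Real.log_le_log (by linarith) (by linarith)
      have h1 : bd*(Real.log (((t1+m : ℕ):ℝ)+1) - Real.log ((t1+m : ℕ):ℝ)) ≤
          |bd| * (Real.log (((t1+m : ℕ):ℝ)+1) - Real.log ((t1+m : ℕ):ℝ)) :=
        mul_le_mul_of_nonneg_right (le_abs_self bd) (by linarith)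
      exact le_trans h1 (hinc _ hprevge)
    have : f t ≤ x + (r*L2 + lr) := by rw [hstep]; linarith
    simpa [hf] using this
  · -- lower bound on t
    have htr1 : (1:ℝ) ≤ (t:ℝ) := by exact_mod_cast le_trans ht1 ht1t
    have hlt : Real.log (t:ℝ) ≤ (t:ℝ) := by
      have := Real.log_le_sub_one_of_pos (by linarith : (0:ℝ) < (t:ℝ)); linarith
    have h1 : bd * Real.log (t:ℝ) ≤ |bd| * (t:ℝ) := by
      have h2 : bd * Real.log (t:ℝ) ≤ |bd| * Real.log (t:ℝ) :=
        mul_le_mul_of_nonneg_right (le_abs_self bd) (Real.log_nonneg htr1)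
      have h3 : |bd| * Real.log (t:ℝ) ≤ |bd| * (t:ℝ) :=
        mul_le_mul_of_nonneg_left hlt (abs_nonneg bd)
      linarith
    have h4 : x - K < r*L2*(t:ℝ) + bd*Real.log (t:ℝ) := by
      simp only [hf] at hft; linarith
    nlinarith
  · -- upper bound on t
    have hgr := hgrow ((t1+m:ℕ):ℝ) (by exact_mod_cast hprevge)
    have hbd : -((r*L2/2) * ((t1+m:ℕ):ℝ)) ≤ bd * Real.log ((t1+m:ℕ):ℝ) := by
      have hlt : 0 ≤ Real.log ((t1+m:ℕ):ℝ) := Real.log_nonneg hprevr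
      nlinarith [neg_abs_le bd]
    have hpx : (r*L2/2) * ((t1+m:ℕ):ℝ) ≤ x := by nlinarith
    have h5 : ((t1+m:ℕ):ℝ) ≤ 2*x/(r*L2) := by
      rw [le_div_iff₀ hrL2]; nlinarith
    have htc : (t:ℝ) = ((t1+m:ℕ):ℝ) + 1 := by rw [htm]; push_cast; ring
    linarith

lemma omega_eq_exp (d : ℕ) (r : ℝ) (b : Fin d → ℝ) (s : Fin d → ℕ) (hs : ∀ j, 1 ≤ s j) :
    OmegaVal d r b s =
      Real.exp (-(∑ j, (r * s j * Real.log 2 + b j * Real.log (s j)))) := by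
  rw [OmegaVal]
  have : ∀ j, (2 : ℝ) ^ (-(r * s j)) * (s j : ℝ) ^ (-(b j)) =
      Real.exp (-(r * s j * Real.log 2 + b j * Real.log (s j))) := by
    intro j
    have hsj : (0:ℝ) < s j := by exact_mod_cast Nat.lt_of_lt_of_le Nat.zero_lt_one (hs j)
    rw [Real.rpow_def_of_pos (by norm_num : (0:ℝ) < 2), Real.rpow_def_of_pos hsj,
      ← Real.exp_add]
    ring_nf
  rw [Finset.prod_congr rfl (fun j _ => this j), ← Real.exp_sum]
  congr 1
  rw [← Finset.sum_neg_distrib]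

lemma mem_theta (d : ℕ) (r : ℝ) (b : Fin d → ℝ) (l N : ℕ) (hN : 1 ≤ N)
    (s : Fin d → ℕ) (hs : ∀ j, 1 ≤ s j)
    (h1 : Real.log N < ∑ j, (r * s j * Real.log 2 + b j * Real.log (s j)))
    (h2 : ∑ j, (r * s j * Real.log 2 + b j * Real.log (s j)) ≤ Real.log N + l * Real.log 2) :
    s ∈ thetaSet d r b l N := by
  have hN0 : (0:ℝ) < N := by exact_mod_cast hN
  set G := ∑ j, (r * s j * Real.log 2 + b j * Real.log (s j)) with hG
  have hΩ : OmegaVal d r b s = Real.exp (-G) := omega_eq_exp d r b s hs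
  refine ⟨hs, ?_, ?_⟩
  · rw [hΩ]
    have hle : Real.exp G ≤ (2:ℝ)^l * N := by
      have : Real.log N + l * Real.log 2 = Real.log ((2:ℝ)^l * N) := by
        rw [Real.log_mul (by positivity) (ne_of_gt hN0), Real.log_pow]; ring
      rw [this] at h2
      calc Real.exp G ≤ Real.exp (Real.log ((2:ℝ)^l * N)) := Real.exp_le_exp.mpr h2
        _ = (2:ℝ)^l * N := Real.exp_log (by positivity)
    rw [Real.exp_neg, one_div]
    exact inv_anti₀ (Real.exp_pos G) hle
  · rw [hΩ]
    have hlt : (N:ℝ) < Real.exp G := by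
      calc (N:ℝ) = Real.exp (Real.log N) := (Real.exp_log hN0).symm
        _ < Real.exp G := Real.exp_lt_exp.mpr h1
    rw [Real.exp_neg, one_div]
    exact inv_strictAnti₀ hN0 hlt

lemma Ksum_bounds (d : ℕ) (r L2 β : ℝ) (b : Fin d → ℝ) (hr : 0 < r) (hL2 : 0 < L2)
    (hβ0 : 0 ≤ β) (hβj : ∀ j, |b j| ≤ β)
    (E : Finset (Fin d)) (v : Fin d → ℕ) (A t1' : ℝ) (ht1'1 : 1 ≤ t1')
    (hcoord : ∀ j ∈ E, t1' ≤ (v j : ℝ) ∧ (v j : ℝ) ≤ 2*A)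
    (hgrow : ∀ t : ℝ, t1' ≤ t → β * Real.log t ≤ (r*L2/2)*t) :
    0 ≤ ∑ j ∈ E, (r * v j * L2 + b j * Real.log (v j)) ∧
    ∑ j ∈ E, (r * v j * L2 + b j * Real.log (v j)) ≤ E.card * ((r*L2+β)*(2*A)) := by
  constructor
  · apply Finset.sum_nonneg
    intro j hj
    obtain ⟨hvl, hvu⟩ := hcoord j hj
    have hv1 : (1:ℝ) ≤ (v j : ℝ) := le_trans ht1'1 hvl
    have hlog : 0 ≤ Real.log (v j : ℝ) := Real.log_nonneg hv1
    have hgr := hgrow (v j) hvl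
    have h1 : (-β) * Real.log (v j) ≤ (-|b j|) * Real.log (v j) :=
      mul_le_mul_of_nonneg_right (by linarith [hβj j]) hlog
    have h2 : (-|b j|) * Real.log (v j) ≤ b j * Real.log (v j) :=
      mul_le_mul_of_nonneg_right (neg_abs_le (b j)) hlog
    have e : r * (v j:ℝ) * L2 = 2*((r*L2/2)*((v j):ℝ)) := by ring
    have hpos : 0 ≤ (r*L2/2)*((v j):ℝ) := by positivity
    linarith
  · have hterm : ∀ j ∈ E, r * v j * L2 + b j * Real.log (v j) ≤ (r*L2+β)*(2*A) := by
      intro j hj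
      obtain ⟨hvl, hvu⟩ := hcoord j hj
      have hv1 : (1:ℝ) ≤ (v j : ℝ) := le_trans ht1'1 hvl
      have hlog0 : 0 ≤ Real.log (v j : ℝ) := Real.log_nonneg hv1
      have hlog1 : Real.log (v j : ℝ) ≤ (v j : ℝ) := by
        have := Real.log_le_sub_one_of_pos (by linarith : (0:ℝ) < (v j:ℝ)); linarith
      have hbj : b j * Real.log (v j) ≤ β * (v j : ℝ) := by
        have h1 : b j * Real.log (v j) ≤ |b j| * Real.log (v j) :=
          mul_le_mul_of_nonneg_right (le_abs_self _) hlog0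
        have h2 : |b j| * Real.log (v j) ≤ β * Real.log (v j) :=
          mul_le_mul_of_nonneg_right (hβj j) hlog0
        have h3 : β * Real.log (v j) ≤ β * (v j : ℝ) :=
          mul_le_mul_of_nonneg_left hlog1 hβ0
        linarith
      have e1 : r * (v j:ℝ) * L2 = (r*L2) * (v j:ℝ) := by ring
      have h4 : (r*L2) * (v j:ℝ) ≤ (r*L2) * (2*A) :=
        mul_le_mul_of_nonneg_left hvu (by positivity)
      have h5 : β * (v j:ℝ) ≤ β * (2*A) := mul_le_mul_of_nonneg_left hvu hβ0
      have e2 : (r*L2+β)*(2*A) = (r*L2)*(2*A) + β*(2*A) := by ring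
      linarith
    have := Finset.sum_le_card_nsmul E _ _ hterm
    rwa [nsmul_eq_mul] at this

lemma delta_bound (dR r L2 β x A δ : ℝ) (hd1 : 1 ≤ dR) (hr : 0 < r) (hL2 : 0 < L2)
    (hL2le : L2 ≤ 1) (hβ0 : 0 ≤ β) (hδdef : δ = 1/(16*dR*(r+1)*(β+1)))
    (hA2 : A ≤ δ*x+1) (hxc : 16*dR*(r*L2+β) ≤ x) (hx0 : 0 < x) :
    dR*((r*L2+β)*(2*A)) ≤ x/2 := by
  have hd0 : 0 < dR := by linarith
  have hδpos : 0 < δ := by rw [hδdef]; positivity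
  have hq : 0 ≤ r*L2+β := by positivity
  have h1 : dR*((r*L2+β)*(2*A)) ≤ dR*((r*L2+β)*(2*(δ*x+1))) := by
    apply mul_le_mul_of_nonneg_left _ hd0.le
    apply mul_le_mul_of_nonneg_left _ hq
    linarith
  have e1 : dR*((r*L2+β)*(2*(δ*x+1))) = 2*dR*(r*L2+β)*δ*x + 2*dR*(r*L2+β) := by ring
  have h2 : 2*dR*(r*L2+β) ≤ x/8 := by linarith
  have h3 : 2*dR*(r*L2+β)*δ ≤ 1/4 := by
    rw [hδdef, mul_one_div, div_le_div_iff₀ (by positivity) (by norm_num)]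
    have hA : r*L2+β ≤ (r+1)*(β+1) := by nlinarith
    have hB := mul_le_mul_of_nonneg_left hA hd0.le
    nlinarith
  have h4 : 2*dR*(r*L2+β)*δ*x ≤ (1/4)*x :=
    mul_le_mul_of_nonneg_right h3 hx0.le
  linarith

lemma start_bound (r L2 β x t1R bi Kv : ℝ) (hr : 0 < r) (hL2 : 0 < L2) (ht1r : 1 ≤ t1R)
    (hbi : |bi| ≤ β) (hβ0 : 0 ≤ β) (hxd : 2*(r*L2+β)*t1R + 1 ≤ x) (hK : Kv ≤ x/2) :
    r*L2*t1R + bi*Real.log t1R + Kv ≤ x := by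
  have hlog0 : 0 ≤ Real.log t1R := Real.log_nonneg ht1r
  have hlog1 : Real.log t1R ≤ t1R := by
    have := Real.log_le_sub_one_of_pos (by linarith : (0:ℝ) < t1R); linarith
  have h1 : bi*Real.log t1R ≤ β * t1R := by
    have h2 : bi*Real.log t1R ≤ |bi| * Real.log t1R :=
      mul_le_mul_of_nonneg_right (le_abs_self _) hlog0
    have h3 : |bi| * Real.log t1R ≤ β * Real.log t1R :=
      mul_le_mul_of_nonneg_right hbi hlog0
    have h4 : β * Real.log t1R ≤ β * t1R := mul_le_mul_of_nonneg_left hlog1 hβ0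
    linarith
  have h5 : r*L2*t1R ≤ (r*L2+β)*t1R := by
    apply mul_le_mul_of_nonneg_right _ (by linarith)
    linarith [mul_pos hr hL2]
  have h6 : β*t1R ≤ (r*L2+β)*t1R := by
    apply mul_le_mul_of_nonneg_right _ (by linarith)
    linarith [mul_pos hr hL2]
  linarith

lemma inc_bound (β lr bi : ℝ) (hβ0 : 0 ≤ β) (hbi : |bi| ≤ β) (hlr : 0 < lr)
    (t1 t : ℕ) (ht1b : β/lr ≤ (t1:ℝ)) (ht1r : (1:ℝ) ≤ (t1:ℝ)) (ht : t1 ≤ t) :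
    |bi| * (Real.log ((t:ℝ)+1) - Real.log t) ≤ lr := by
  have htt1 : (t1:ℝ) ≤ (t:ℝ) := by exact_mod_cast ht
  have htr : (1:ℝ) ≤ (t:ℝ) := le_trans ht1r htt1
  have ht0 : (0:ℝ) < (t:ℝ) := by linarith
  have hΔ : Real.log ((t:ℝ)+1) - Real.log t ≤ 1/(t:ℝ) := by
    have h1 : Real.log (((t:ℝ)+1)/(t:ℝ)) ≤ ((t:ℝ)+1)/(t:ℝ) - 1 :=
      Real.log_le_sub_one_of_pos (by positivity)
    rw [Real.log_div (by linarith) (ne_of_gt ht0)] at h1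
    have h2 : ((t:ℝ)+1)/(t:ℝ) - 1 = 1/(t:ℝ) := by field_simp; ring
    linarith [h2 ▸ h1]
  have hΔ0 : 0 ≤ Real.log ((t:ℝ)+1) - Real.log t := by
    have := Real.log_le_log ht0 (by linarith : (t:ℝ) ≤ (t:ℝ)+1); linarith
  have h3 : |bi| * (Real.log ((t:ℝ)+1) - Real.log t) ≤ β * (1/(t:ℝ)) := by
    have h4 : |bi| * (Real.log ((t:ℝ)+1) - Real.log t) ≤ β * (Real.log ((t:ℝ)+1) - Real.log t) :=
      mul_le_mul_of_nonneg_right hbi hΔ0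
    have h5 : β * (Real.log ((t:ℝ)+1) - Real.log t) ≤ β * (1/(t:ℝ)) :=
      mul_le_mul_of_nonneg_left hΔ hβ0
    linarith
  have h6 : β * (1/(t:ℝ)) ≤ lr := by
    rw [div_le_iff₀ hlr] at ht1b
    rw [mul_one_div, div_le_iff₀ ht0]
    nlinarith
  linarith

lemma count_bound (n : ℕ) (δ x A c : ℝ) (hδ : 0 < δ) (hx0 : 0 < x)
    (hc : c = δ^n/2) (hA1 : δ*x ≤ A) :
    c * x^n ≤ (A+1)^n := by
  have h2 : (δ*x)^n ≤ (A+1)^n := by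
    apply pow_le_pow_left₀ (by positivity)
    linarith
  have h3 : c * x^n ≤ (δ*x)^n := by
    rw [hc, mul_pow]
    apply mul_le_mul_of_nonneg_right _ (by positivity)
    have : 0 ≤ δ^n := by positivity
    linarith
  linarith

lemma coordg_low (r L2 β x gR bi c₁ δ : ℝ) (hr : 0 < r) (hL2 : 0 < L2) (hβ0 : 0 ≤ β)
    (hbi : |bi| ≤ β) (hx0 : 0 < x) (hgnn : 0 ≤ gR)
    (hc₁ : c₁ = min δ (1/(2*(r*L2+β+1))))
    (h1 : x/2 ≤ (r*L2 + |bi|) * gR) : c₁ * x ≤ gR := by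
  have h2 : (r*L2 + |bi|) * gR ≤ (r*L2+β+1) * gR := by
    apply mul_le_mul_of_nonneg_right _ hgnn
    linarith
  have h3 : c₁ * x ≤ (1/(2*(r*L2+β+1))) * x := by
    apply mul_le_mul_of_nonneg_right _ hx0.le
    rw [hc₁]; exact min_le_right _ _
  have hpos : 0 < 2*(r*L2+β+1) := by positivity
  have h4 : (1/(2*(r*L2+β+1))) * x ≤ gR := by
    rw [div_mul_eq_mul_div, one_mul, div_le_iff₀ hpos]
    nlinarith
  linarith

lemma coordg_high (r L2 x gR t1R C₁ δ : ℝ) (hr : 0 < r) (hL2 : 0 < L2) (hx1 : 1 ≤ x)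
    (ht1nn : 0 ≤ t1R) (hδ : 0 < δ) (hC₁ : C₁ = t1R + 2/(r*L2) + 2*δ + 3)
    (h1 : gR ≤ 1 + 2*x/(r*L2)) : gR ≤ C₁ * x := by
  have hx0 : 0 < x := by linarith
  have hp : 0 < 2/(r*L2) := by positivity
  have e1 : 2*x/(r*L2) = (2/(r*L2)) * x := by ring
  have h2 : (1:ℝ) ≤ 1 * x := by linarith
  have h3 : (2/(r*L2)) * x ≤ (2/(r*L2)) * x := le_refl _
  rw [hC₁]
  have h4 : (0:ℝ) ≤ t1R * x := by positivity
  have h5 : (0:ℝ) ≤ 2*δ*x := by positivity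
  nlinarith

lemma coordv_high (r L2 x vj A δ t1R C₁ : ℝ) (hr : 0 < r) (hL2 : 0 < L2) (hx1 : 1 ≤ x)
    (hδ : 0 < δ) (ht1nn : 0 ≤ t1R) (hC₁ : C₁ = t1R + 2/(r*L2) + 2*δ + 3)
    (hA2 : A ≤ δ*x+1) (hvu : vj ≤ 2*A) : vj ≤ C₁*x := by
  have hx0 : 0 < x := by linarith
  have hp : 0 < 2/(r*L2) := by positivity
  rw [hC₁]
  nlinarith [mul_pos hδ hx0, mul_nonneg ht1nn hx0.le, mul_nonneg hp.le hx0.le]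

set_option maxHeartbeats 1000000 in
/-- A positive proportion of the boundary layer `Θ(N)` consists of indices with all
coordinates comparable to `log N`: there are `c ∈ (0,1)`, `c₁, C₁ > 0` and, for all
large `N`, a subset `Θ'(N) ⊆ Θ(N)` with `|Θ'(N)| ≥ c (log N)^{d−1}` all of whose
elements `s` satisfy `c₁ log N ≤ s_j ≤ C₁ log N` for every `j`. -/
theorem stmt_13 (d : ℕ) (hd : 1 ≤ d) (r : ℝ) (hr : 0 < r) (b : Fin d → ℝ)
    (hb : ∀ j, b j < r) (l : ℕ) (hl : r < l) :
    ∃ c : ℝ, 0 < c ∧ c < 1 ∧ ∃ c₁ C₁ : ℝ, 0 < c₁ ∧ 0 < C₁ ∧ ∃ N₀ : ℕ, ∀ N : ℕ, N₀ ≤ N →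
      ∃ Θ' : Set (Fin d → ℕ), Θ' ⊆ thetaSet d r b l N ∧
        c * Real.log N ^ (d - 1 : ℝ) ≤ (Θ'.ncard : ℝ) ∧
        ∀ s ∈ Θ', ∀ j, c₁ * Real.log N ≤ (s j : ℝ) ∧ (s j : ℝ) ≤ C₁ * Real.log N := by
  classical
  have hd0 : (0:ℝ) < d := by exact_mod_cast hd
  have hd1 : (1:ℝ) ≤ (d:ℝ) := by exact_mod_cast hd
  set L2 : ℝ := Real.log 2 with hL2def
  have hL2 : 0 < L2 := Real.log_pos (by norm_num)
  have hL2le : L2 ≤ 1 := by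
    have := Real.log_le_sub_one_of_pos (by norm_num : (0:ℝ) < 2)
    simp only [hL2def]; linarith
  set β : ℝ := ∑ j, |b j| with hβdef
  have hβ0 : 0 ≤ β := Finset.sum_nonneg fun j _ => abs_nonneg _
  have hβj : ∀ j, |b j| ≤ β := by
    intro j
    rw [hβdef]
    exact Finset.single_le_sum (fun i _ => abs_nonneg (b i)) (Finset.mem_univ j)
  set δ : ℝ := 1/(16*d*(r+1)*(β+1)) with hδdef
  have hδ : 0 < δ := by positivity
  have hδ1 : δ ≤ 1 := by
    rw [hδdef, div_le_one (by positivity)]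
    have h1 : (1:ℝ) ≤ 16*(d:ℝ) := by linarith
    have h2 : (1:ℝ) ≤ (16*(d:ℝ))*(r+1) := by nlinarith
    nlinarith
  clear_value β δ
  set lr : ℝ := ((l:ℝ) - r) * L2 with hlrdef
  have hlrpos : 0 < lr := mul_pos (by linarith) hL2
  -- the starting point t1
  set t1 : ℕ := ⌈max ((2*(β+1)/(r*L2/2))^2) (β/lr)⌉₊ + 1 with ht1def
  have ht1one : 1 ≤ t1 := Nat.le_add_left 1 _
  have ht1r : (1:ℝ) ≤ (t1:ℝ) := by exact_mod_cast ht1one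
  have ht1a : ((2*(β+1)/(r*L2/2))^2 : ℝ) ≤ t1 := by
    rw [ht1def]
    push_cast
    calc ((2*(β+1)/(r*L2/2))^2 : ℝ) ≤ max ((2*(β+1)/(r*L2/2))^2) (β/lr) := le_max_left _ _
      _ ≤ ⌈max ((2*(β+1)/(r*L2/2))^2) (β/lr)⌉₊ := Nat.le_ceil _
      _ ≤ _ := by linarith [Nat.le_ceil (max ((2*(β+1)/(r*L2/2))^2) (β/lr))]
  have ht1b : (β/lr : ℝ) ≤ t1 := by
    rw [ht1def]
    push_cast
    calc (β/lr : ℝ) ≤ max ((2*(β+1)/(r*L2/2))^2) (β/lr) := le_max_right _ _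
      _ ≤ ⌈max ((2*(β+1)/(r*L2/2))^2) (β/lr)⌉₊ := Nat.le_ceil _
      _ ≤ _ := by linarith
  have ht1grow : ∀ t : ℝ, (t1:ℝ) ≤ t → β * Real.log t ≤ (r*L2/2) * t := by
    intro t ht
    exact aux_grow β (r*L2/2) hβ0 (by positivity) (le_trans ht1a ht)
  clear_value t1
  -- the distinguished coordinate
  set i0 : Fin d := ⟨d-1, by omega⟩ with hi0def
  clear_value i0
  -- constants
  set c₁ : ℝ := min δ (1/(2*(r*L2+β+1))) with hc₁def
  have hc₁pos : 0 < c₁ := lt_min hδ (by positivity)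
  set C₁ : ℝ := (t1:ℝ) + 2/(r*L2) + 2*δ + 3 with hC₁def
  have hC₁pos : 0 < C₁ := by positivity
  set c : ℝ := δ^(d-1)/2 with hcdef
  have hcpos : 0 < c := by positivity
  have hclt : c < 1 := by
    rw [hcdef]
    have : δ^(d-1) ≤ 1 := pow_le_one₀ hδ.le hδ1
    linarith
  set X0 : ℝ := max (max 1 ((t1:ℝ)/δ)) (max (16*d*(r*L2+β)) (2*(r*L2+β)*t1 + 1)) with hX0def
  clear_value c₁ C₁ c
  refine ⟨c, hcpos, hclt, c₁, C₁, hc₁pos, hC₁pos, ⌈Real.exp X0⌉₊ + 1, ?_⟩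
  intro N hN
  have hN1 : 1 ≤ N := le_trans (Nat.le_add_left 1 _) hN
  have hN0 : (0:ℝ) < N := by exact_mod_cast hN1
  set x : ℝ := Real.log N with hxdef
  have hX0x : X0 ≤ x := by
    rw [hxdef, Real.le_log_iff_exp_le hN0]
    calc Real.exp X0 ≤ (⌈Real.exp X0⌉₊ : ℝ) := Nat.le_ceil _
      _ ≤ (N:ℝ) := by exact_mod_cast le_trans (Nat.le_succ _) hN
  have hx1 : 1 ≤ x := le_trans (le_trans (le_max_left _ _) (le_max_left _ _)) hX0x
  have hxδ : (t1:ℝ)/δ ≤ x := le_trans (le_trans (le_max_right _ _) (le_max_left _ _)) hX0x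
  have hxc : 16*d*(r*L2+β) ≤ x := le_trans (le_trans (le_max_left _ _) (le_max_right _ _)) hX0x
  have hxd : 2*(r*L2+β)*t1 + 1 ≤ x := le_trans (le_trans (le_max_right _ _) (le_max_right _ _)) hX0x
  have hx0 : 0 < x := by linarith
  clear_value X0 x
  -- the common coordinate scale
  set A : ℕ := ⌈δ * x⌉₊ with hAdef
  have hA1 : δ * x ≤ (A:ℝ) := Nat.le_ceil _
  have hA2 : (A:ℝ) ≤ δ*x + 1 := (Nat.ceil_lt_add_one (by positivity)).le
  have hAt1 : (t1:ℝ) ≤ (A:ℝ) := by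
    have : (t1:ℝ) ≤ δ * x := by
      rw [div_le_iff₀ hδ] at hxδ; linarith [mul_comm x δ]
    linarith
  have hAt1n : t1 ≤ A := by exact_mod_cast hAt1
  have hA1n : 1 ≤ A := le_trans ht1one hAt1n
  clear_value A
  -- the box of free coordinates
  set box : Finset (Fin d → ℕ) :=
    Fintype.piFinset (fun j => if j = i0 then {1} else Finset.Icc A (2*A)) with hboxdef
  have hbox : ∀ v ∈ box, (∀ j, j ≠ i0 → A ≤ v j ∧ v j ≤ 2*A) ∧ v i0 = 1 := by
    intro v hv
    rw [hboxdef, Fintype.mem_piFinset] at hv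
    constructor
    · intro j hj
      have := hv j
      rw [if_neg hj, Finset.mem_Icc] at this
      exact this
    · have := hv i0
      rwa [if_pos rfl, Finset.mem_singleton] at this
  -- the partial exponent sum
  set K : (Fin d → ℕ) → ℝ :=
    fun v => ∑ j ∈ Finset.univ.erase i0, (r * v j * L2 + b j * Real.log (v j)) with hKdef
  clear_value K
  have hcard_erase : (Finset.univ.erase i0).card = d - 1 := by
    rw [Finset.card_erase_of_mem (Finset.mem_univ i0), Finset.card_univ, Fintype.card_fin]
  have hKsum : ∀ v ∈ box, 0 ≤ K v ∧ K v ≤ ((d-1:ℕ):ℝ) * ((r*L2+β)*(2*(A:ℝ))) := by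
    intro v hv
    have hcoord : ∀ j ∈ Finset.univ.erase i0, (t1:ℝ) ≤ (v j : ℝ) ∧ (v j : ℝ) ≤ 2*(A:ℝ) := by
      intro j hj
      obtain ⟨hvl, hvu⟩ := (hbox v hv).1 j (Finset.mem_erase.mp hj).1
      constructor
      · exact le_trans hAt1 (by exact_mod_cast hvl)
      · exact_mod_cast hvu
    have h := Ksum_bounds d r L2 β b hr hL2 hβ0 hβj (Finset.univ.erase i0) v (A:ℝ) (t1:ℝ)
      ht1r hcoord ht1grow
    rw [hKdef]
    rw [hcard_erase] at h
    exact h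
  have hK0 : ∀ v ∈ box, 0 ≤ K v := fun v hv => (hKsum v hv).1
  have hKup : ∀ v ∈ box, K v ≤ x/2 := by
    intro v hv
    have h1 := (hKsum v hv).2
    have h2 : ((d-1:ℕ):ℝ) ≤ (d:ℝ) := by
      have : (d-1:ℕ) ≤ d := Nat.sub_le _ _
      exact_mod_cast this
    have h3 : ((d-1:ℕ):ℝ) * ((r*L2+β)*(2*(A:ℝ))) ≤ (d:ℝ) * ((r*L2+β)*(2*(A:ℝ))) :=
      mul_le_mul_of_nonneg_right h2 (by positivity)
    exact le_trans h1 (le_trans h3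
      (delta_bound (d:ℝ) r L2 β x (A:ℝ) δ hd1 hr hL2 hL2le hβ0 hδdef hA2 hxc hx0))
  -- existence of the last coordinate
  have hgrow' : ∀ t : ℝ, (t1:ℝ) ≤ t → |b i0| * Real.log t ≤ (r*L2/2) * t := by
    intro t ht
    have hlog : 0 ≤ Real.log t := Real.log_nonneg (le_trans ht1r ht)
    have h1 : |b i0| * Real.log t ≤ β * Real.log t :=
      mul_le_mul_of_nonneg_right (hβj i0) hlog
    linarith [ht1grow t ht]
  have hinc' : ∀ t : ℕ, t1 ≤ t → |b i0| * (Real.log ((t:ℝ)+1) - Real.log t) ≤ lr :=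
    fun t ht => inc_bound β lr (b i0) hβ0 (hβj i0) hlrpos t1 t ht1b ht1r ht
  have hstart' : ∀ v ∈ box, r*L2*(t1:ℝ) + b i0*Real.log (t1:ℝ) + K v ≤ x :=
    fun v hv => start_bound r L2 β x (t1:ℝ) (b i0) (K v) hr hL2 ht1r (hβj i0) hβ0 hxd
      (hKup v hv)
  have hstep : ∀ v ∈ box, ∃ t : ℕ, t1 ≤ t ∧
      x < r*L2*t + b i0*Real.log t + K v ∧
      r*L2*t + b i0*Real.log t + K v ≤ x + (r*L2 + lr) ∧
      x - K v ≤ (r*L2 + |b i0|) * t ∧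
      (t:ℝ) ≤ 1 + 2*x/(r*L2) :=
    fun v hv => exists_step r lr L2 (b i0) (K v) x hr hL2 (hK0 v hv) t1 ht1one hgrow' hinc'
      (hstart' v hv)
  choose g hg using hstep
  -- the map and the set
  set F : (Fin d → ℕ) → (Fin d → ℕ) :=
    fun v => if h : v ∈ box then Function.update v i0 (g v h) else v with hFdef
  clear_value F
  refine ⟨↑(box.image F), ?_, ?_, ?_⟩
  · -- subset of thetaSet
    intro s hs
    simp only [Finset.coe_image, Set.mem_image, Finset.mem_coe] at hs
    obtain ⟨v, hv, rfl⟩ := hs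
    rw [hFdef]
    simp only [dif_pos hv]
    obtain ⟨hgt1, hglt, hgle, hglo, hghi⟩ := hg v hv
    set s := Function.update v i0 (g v hv) with hsdef
    have hsi0 : s i0 = g v hv := Function.update_self _ _ _
    have hsj : ∀ j, j ≠ i0 → s j = v j := fun j hj => Function.update_of_ne hj _ _
    have hscoord : ∀ j, 1 ≤ s j := by
      intro j
      by_cases hj : j = i0
      · rw [hj, hsi0]; exact le_trans ht1one hgt1
      · rw [hsj j hj]; exact le_trans hA1n ((hbox v hv).1 j hj).1
    have hGsum : ∑ j, (r * s j * Real.log 2 + b j * Real.log (s j)) =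
        r*L2*(g v hv) + b i0*Real.log (g v hv) + K v := by
      rw [← Finset.add_sum_erase _ _ (Finset.mem_univ i0)]
      rw [hKdef]
      have h1 : ∑ j ∈ Finset.univ.erase i0, (r * s j * Real.log 2 + b j * Real.log (s j)) =
          ∑ j ∈ Finset.univ.erase i0, (r * v j * L2 + b j * Real.log (v j)) := by
        apply Finset.sum_congr rfl
        intro j hj
        rw [hsj j (Finset.mem_erase.mp hj).1, hL2def]
      rw [h1, hsi0, hL2def]
      ring
    apply mem_theta d r b l N hN1 s hscoord
    · rw [hGsum, ← hxdef]; exact hglt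
    · rw [hGsum, ← hxdef]
      have he : r*L2 + lr = (l:ℝ)*L2 := by rw [hlrdef]; ring
      linarith [he ▸ hgle]
  · -- cardinality bound
    rw [Set.ncard_coe_finset]
    have hinj : Set.InjOn F box := by
      intro v hv w hw hvw
      simp only [Finset.mem_coe] at hv hw
      rw [hFdef] at hvw
      simp only [dif_pos hv, dif_pos hw] at hvw
      funext j
      by_cases hj : j = i0
      · rw [hj, (hbox v hv).2, (hbox w hw).2]
      · have := congrFun hvw j
        rwa [Function.update_of_ne hj, Function.update_of_ne hj] at this
    rw [Finset.card_image_of_injOn hinj]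
    have hcardbox : box.card = (A+1)^(d-1) := by
      rw [hboxdef, Fintype.card_piFinset]
      have h1 : ∀ j : Fin d, (if j = i0 then ({1} : Finset ℕ) else Finset.Icc A (2*A)).card =
          if j = i0 then 1 else A + 1 := by
        intro j
        by_cases hj : j = i0
        · simp [hj]
        · simp [hj, Nat.card_Icc]; omega
      rw [Finset.prod_congr rfl (fun j _ => h1 j)]
      rw [← Finset.mul_prod_erase _ _ (Finset.mem_univ i0), if_pos rfl, one_mul]
      rw [Finset.prod_congr rfl (fun j hj => if_neg (Finset.mem_erase.mp hj).1),
        Finset.prod_const, hcard_erase]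
    rw [hcardbox]
    have hdcast : ((d:ℝ) - 1) = ((d-1 : ℕ) : ℝ) := by
      have h0 := Nat.cast_sub hd (R := ℝ)
      simp at h0
      linarith
    rw [hdcast, Real.rpow_natCast]
    have h2 := count_bound (d-1) δ x (A:ℝ) c hδ hx0 hcdef hA1
    calc c * x^(d-1) ≤ ((A:ℝ)+1)^(d-1) := h2
      _ = (((A+1)^(d-1) : ℕ) : ℝ) := by push_cast; ring
  · -- coordinate bounds
    intro s hs j
    simp only [Finset.coe_image, Set.mem_image, Finset.mem_coe] at hs
    obtain ⟨v, hv, rfl⟩ := hs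
    rw [hFdef]
    simp only [dif_pos hv]
    obtain ⟨hgt1, hglt, hgle, hglo, hghi⟩ := hg v hv
    by_cases hj : j = i0
    · rw [hj, Function.update_self]
      constructor
      · apply coordg_low r L2 β x _ (b i0) c₁ δ hr hL2 hβ0 (hβj i0) hx0
          (Nat.cast_nonneg _) hc₁def
        have := hKup v hv
        linarith
      · exact coordg_high r L2 x _ (t1:ℝ) C₁ δ hr hL2 hx1 (by positivity) hδ hC₁def hghi
    · rw [Function.update_of_ne hj]
      obtain ⟨hvl, hvu⟩ := (hbox v hv).1 j hj
      have hvlr : (A:ℝ) ≤ (v j : ℝ) := by exact_mod_cast hvl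
      have hvur : (v j : ℝ) ≤ 2*(A:ℝ) := by exact_mod_cast hvu
      constructor
      · have hm : c₁ ≤ δ := by rw [hc₁def]; exact min_le_left _ _
        have h1 : c₁*x ≤ δ*x := mul_le_mul_of_nonneg_right hm hx0.le
        linarith
      · exact coordv_high r L2 x _ (A:ℝ) δ (t1:ℝ) C₁ hr hL2 hx1 hδ (by positivity)
          hC₁def hA2 hvur
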